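/- arXiv:0906.2318 — 2 statements merged into one kernel-verified Lean document; each statement's English description precedes it below -/
import Mathlib

section
/- (Dalang–Morton–Willinger) Let (S_n)_{n=0,1,…,N} be a real-valued process adapted to a discrete filtration (F_n)_{n=0,1,…,N}, and let K = { Σ_{n=1}^{N} f_{n−1}(S_n − S_{n−1}) : each f_{n−1} : Ω → ℝ is F_{n−1}-measurable }. If K ∩ L⁰_+ = {0}, i.e., every element ξ of K with ξ ≥ 0 a.s. satisfies ξ = 0 a.s., then there exists a probability measure Q on (Ω, F), mutually absolutely continuous with P, such that each S_n is Q-integrable and E_Q[S_{n+1} | F_n] = S_n a.s. for all 0 ≤ n < N, i.e., S is a Q-martingale. -/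
open MeasureTheory ProbabilityTheory Filter Set
open scoped NNReal ENNReal

variable {Ω : Type*} {m0 : MeasurableSpace Ω}

/-- A simple predictable integrand with bounded support for the filtration `ℱ`:
`H = g₀ 1_{{0}} + ∑_{j=1}^{n-1} g_j 1_{(τ_j, τ_{j+1}]}` with `n ≥ 2`,
`0 ≤ τ₁ ≤ ⋯ ≤ τ_n` stopping times, `τ_n` bounded, and `g_j` being `F_{τ_j}`-measurable. -/
structure SimpleStrategy (ℱ : MeasureTheory.Filtration ℝ≥0 m0) where
  n : ℕ
  two_le : 2 ≤ n
  g0 : ℝ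
  τ : ℕ → Ω → ℝ≥0
  g : ℕ → Ω → ℝ
  stopping : ∀ j, 1 ≤ j → j ≤ n → MeasureTheory.IsStoppingTime ℱ (fun ω => ((τ j ω : ℝ≥0) : WithTop ℝ≥0))
  mono : ∀ j, 1 ≤ j → j < n → ∀ ω, τ j ω ≤ τ (j + 1) ω
  bounded : ∃ T : ℝ≥0, ∀ ω, τ n ω ≤ T
  g_meas : ∀ j (h1 : 1 ≤ j) (h2 : j < n),
    Measurable[(stopping j h1 h2.le).measurableSpace] (g j)

/-- terminal gain `(H ⬝ X)_∞ = ∑_{j=1}^{n-1} g_j (X_{τ_{j+1}} - X_{τ_j})`. -/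
def SimpleStrategy.gains {ℱ : MeasureTheory.Filtration ℝ≥0 m0}
    (H : SimpleStrategy ℱ) (X : ℝ≥0 → Ω → ℝ) (ω : Ω) : ℝ :=
  ∑ j ∈ Finset.Ico 1 H.n, H.g j ω * (X (H.τ (j + 1) ω) ω - X (H.τ j ω) ω)

/-- membership in `Sʰ(𝔽)` : the jump times are at least `h` apart. -/
def SimpleStrategy.Spaced {ℱ : MeasureTheory.Filtration ℝ≥0 m0}
    (H : SimpleStrategy ℱ) (h : ℝ≥0) : Prop :=
  ∀ j, 1 ≤ j → j < H.n → ∀ ω, H.τ j ω + h ≤ H.τ (j + 1) ω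

/-- `H` is an arbitrage for `X` under `μ`. -/
def IsArbitrage {ℱ : MeasureTheory.Filtration ℝ≥0 m0} (μ : MeasureTheory.Measure Ω)
    (X : ℝ≥0 → Ω → ℝ) (H : SimpleStrategy ℱ) : Prop :=
  (∀ᵐ ω ∂μ, 0 ≤ H.gains X ω) ∧ 0 < μ {ω | 0 < H.gains X ω}

/-- no arbitrage in the class `S(𝔽)` of simple predictable integrands of bounded support. -/
def NoArbitrageSimple (μ : MeasureTheory.Measure Ω) (ℱ : MeasureTheory.Filtration ℝ≥0 m0)
    (X : ℝ≥0 → Ω → ℝ) : Prop :=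
  ¬ ∃ H : SimpleStrategy ℱ, IsArbitrage μ X H

/-- no arbitrage in the Cheridito class `Π(𝔽) = ⋃_{h>0} Sʰ(𝔽)`. -/
def NoArbitrageCC (μ : MeasureTheory.Measure Ω) (ℱ : MeasureTheory.Filtration ℝ≥0 m0)
    (X : ℝ≥0 → Ω → ℝ) : Prop :=
  ¬ ∃ (h : ℝ≥0) (H : SimpleStrategy ℱ), 0 < h ∧ H.Spaced h ∧ IsArbitrage μ X H

/-- `η ∈ L⁰_{+-}` : `η` is neither a nonnegative r.v. that is positive with positive
probability, nor a nonpositive r.v. that is negative with positive probability. -/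
def MemLzeroPM (μ : MeasureTheory.Measure Ω) (η : Ω → ℝ) : Prop :=
  ¬ ((∀ᵐ ω ∂μ, 0 ≤ η ω) ∧ 0 < μ {ω | 0 < η ω}) ∧
  ¬ ((∀ᵐ ω ∂μ, η ω ≤ 0) ∧ 0 < μ {ω | η ω < 0})

/-- all paths are right continuous with left limits. -/
def IsCadlag (X : ℝ≥0 → Ω → ℝ) : Prop :=
  ∀ ω, (∀ t : ℝ≥0, ContinuousWithinAt (fun s => X s ω) (Set.Ici t) t) ∧
    (∀ t : ℝ≥0, 0 < t →
      ∃ l : ℝ, Filter.Tendsto (fun s => X s ω) (nhdsWithin t (Set.Iio t)) (nhds l))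

/-- a standard Brownian motion w.r.t. the filtration `ℱ`. -/
def IsStandardBM (μ : MeasureTheory.Measure Ω) (ℱ : MeasureTheory.Filtration ℝ≥0 m0)
    (B : ℝ≥0 → Ω → ℝ) : Prop :=
  MeasureTheory.Adapted ℱ B ∧ (∀ ω, B 0 ω = 0) ∧ (∀ ω, Continuous fun t => B t ω) ∧
  ∀ s t : ℝ≥0, s < t →
    ProbabilityTheory.Indep
      (MeasurableSpace.comap (fun ω => B t ω - B s ω) (inferInstance : MeasurableSpace ℝ))
      (ℱ s) μ ∧
    MeasureTheory.Measure.map (fun ω => B t ω - B s ω) μ =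
      ProbabilityTheory.gaussianReal 0 (t - s)


/-!
Backward induction over the periods. First tilt `P` by the density proportional to
`1 / (1 + ∑ₙ |Sₙ|)`, under which every `Sₙ` is integrable. Given an equivalent measure `Q` under
which `S` is a martingale from time `t + 1` on, write `X = S (t + 1) - S t`,
`A = E_Q[X⁺ | ℱ t]` and `B = E_Q[X⁻ | ℱ t]`. No arbitrage forces `A` and `B` to vanish on the same
`ℱ t`-measurable set, on which `X = 0`; hence the `ℱ (t + 1)`-measurable weight `Z` equal to
`B / (A + B)` on `{X > 0}`, to `A / (A + B)` on `{X < 0}` and to `1` on `{X = 0}` lies in `(0, 1]`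
and satisfies `E_Q[Z X | ℱ t] = (B A - A B) / (A + B) = 0`. Tilting `Q` by `Z` makes the period `t`
a martingale step, and by Bayes' formula it leaves the later periods untouched, since `Z` is
`ℱ n`-measurable for every `n > t`.
-/

open Real

namespace MeasureTheory

variable {α : Type*} {m mα : MeasurableSpace α} {μ : Measure α} {φ : α → ℝ} {C : ℝ}

theorem ae_norm_exp_le (hC : ∀ᵐ ω ∂μ, φ ω ≤ C) : ∀ᵐ ω ∂μ, ‖exp (φ ω)‖ ≤ exp C := by
  filter_upwards [hC] with ω h
  rw [norm_of_nonneg (exp_pos _).le]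
  exact exp_le_exp.2 h

theorem Integrable.exp_mul_of_ae_le (hφ : Measurable φ) (hC : ∀ᵐ ω ∂μ, φ ω ≤ C) {X : α → ℝ}
    (hX : Integrable X μ) : Integrable (fun ω => exp (φ ω) * X ω) μ :=
  hX.bdd_mul (by fun_prop) (ae_norm_exp_le hC)

section FiniteMeasure

variable [IsFiniteMeasure μ]

theorem integrable_exp_of_ae_le (hφ : Measurable φ) (hC : ∀ᵐ ω ∂μ, φ ω ≤ C) :
    Integrable (fun ω => exp (φ ω)) μ := by
  simpa using (integrable_const (1 : ℝ)).exp_mul_of_ae_le hφ hC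

theorem integrable_tilted_of_ae_le (hφ : Measurable φ) (hC : ∀ᵐ ω ∂μ, φ ω ≤ C) {X : α → ℝ}
    (hX : Integrable X μ) : Integrable X (μ.tilted φ) := by
  rw [integrable_tilted_iff (integrable_exp_of_ae_le hφ hC)]
  simpa only [smul_eq_mul] using hX.exp_mul_of_ae_le hφ hC

theorem ae_eq_zero_of_condExp_eq_zero (hm : m ≤ mα) {g : α → ℝ} (hg : Integrable g μ)
    (hg0 : 0 ≤ᵐ[μ] g) : ∀ᵐ ω ∂μ, μ[g|m] ω = 0 → g ω = 0 := by
  set s := {ω | μ[g|m] ω = 0}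
  have hs : MeasurableSet[m] s :=
    stronglyMeasurable_condExp.measurableSet_eq_fun stronglyMeasurable_const
  have hint : ∫ ω in s, g ω ∂μ = 0 := by
    rw [← setIntegral_condExp hm hg hs]
    exact setIntegral_eq_zero_of_forall_eq_zero fun ω hω => hω
  have hzero :=
    (setIntegral_eq_zero_iff_of_nonneg_ae (ae_restrict_of_ae hg0) hg.integrableOn).1 hint
  exact (ae_restrict_iff' (hm s hs)).1 hzero

theorem condExp_mul_sub_ae_eq_zero (hm : m ≤ mα) {g X Y : α → ℝ}
    (hg : StronglyMeasurable[m] g) (hgC : ∀ᵐ ω ∂μ, ‖g ω‖ ≤ C) (hX : Integrable X μ)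
    (hY : StronglyMeasurable[m] Y) (hYi : Integrable Y μ) (h : μ[X|m] =ᵐ[μ] Y) :
    μ[fun ω => g ω * (X ω - Y ω)|m] =ᵐ[μ] 0 := by
  have hXY : μ[X - Y|m] =ᵐ[μ] 0 := by
    filter_upwards [condExp_sub hX hYi m, h] with ω h1 h2
    simp [h1, h2, condExp_of_stronglyMeasurable hm hY hYi]
  calc μ[fun ω => g ω * (X ω - Y ω)|m] =ᵐ[μ] g * μ[X - Y|m] :=
        condExp_stronglyMeasurable_mul_of_bound hm hg (hX.sub hYi) C hgC
    _ =ᵐ[μ] 0 := by filter_upwards [hXY] with ω hω; simp [hω]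

theorem condExp_tilted_ae_eq (hm : m ≤ mα) (hφ : Measurable φ) (hC : ∀ᵐ ω ∂μ, φ ω ≤ C)
    {X Y : α → ℝ} (hX : Integrable X μ) (hY : StronglyMeasurable[m] Y) (hYi : Integrable Y μ)
    (h : μ[fun ω => exp (φ ω) * (X ω - Y ω)|m] =ᵐ[μ] 0) :
    (μ.tilted φ)[X|m] =ᵐ[μ.tilted φ] Y := by
  refine (ae_eq_condExp_of_forall_setIntegral_eq hm (integrable_tilted_of_ae_le hφ hC hX)
    (fun s _ _ => (integrable_tilted_of_ae_le hφ hC hYi).integrableOn) (fun s hs _ => ?_)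
    hY.aestronglyMeasurable).symm
  have hdiff : ∫ ω in s, exp (φ ω) * (X ω - Y ω) ∂μ = 0 := by
    rw [← setIntegral_condExp hm
        (Integrable.exp_mul_of_ae_le hφ hC (X := fun ω => X ω - Y ω) (hX.sub hYi)) hs,
      integral_congr_ae (ae_restrict_of_ae h)]
    simp
  have hXY : ∫ ω in s, exp (φ ω) * X ω ∂μ = ∫ ω in s, exp (φ ω) * Y ω ∂μ := by
    rw [← sub_eq_zero, ← hdiff, ← integral_sub (hX.exp_mul_of_ae_le hφ hC).integrableOn
      (hYi.exp_mul_of_ae_le hφ hC).integrableOn]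
    simp only [mul_sub]
  have htilted : ∀ Z : α → ℝ, ∫ ω in s, Z ω ∂μ.tilted φ =
      (∫ ω in s, exp (φ ω) * Z ω ∂μ) / ∫ ω, exp (φ ω) ∂μ := by
    intro Z
    rw [setIntegral_tilted' φ Z (hm s hs), ← integral_div]
    simp only [smul_eq_mul, div_mul_eq_mul_div]
  rw [htilted, htilted, hXY]

end FiniteMeasure

theorem exists_equiv_probabilityMeasure_integrable [IsProbabilityMeasure μ] {ι : Type*}
    (s : Finset ι) {f : ι → α → ℝ} (hf : ∀ i ∈ s, Measurable (f i)) :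
    ∃ Q : Measure α, IsProbabilityMeasure Q ∧ Q ≪ μ ∧ μ ≪ Q ∧ ∀ i ∈ s, Integrable (f i) Q := by
  set F : α → ℝ := fun ω => ∑ i ∈ s, |f i ω|
  have hF : Measurable F := Finset.measurable_sum _ fun i hi => (hf i hi).abs
  have hF0 : ∀ ω, 0 ≤ F ω := fun ω => Finset.sum_nonneg fun i _ => abs_nonneg _
  set φ : α → ℝ := fun ω => -log (1 + F ω)
  have hφ0 : ∀ ω, φ ω ≤ 0 := fun ω => neg_nonpos.2 (log_nonneg (by linarith [hF0 ω]))
  have hexp := integrable_exp_of_ae_le (by fun_prop) (ae_of_all μ hφ0)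
  refine ⟨μ.tilted φ, isProbabilityMeasure_tilted hexp, tilted_absolutelyContinuous μ φ,
    absolutelyContinuous_tilted hexp, fun i hi => ?_⟩
  have hFint : Integrable F (μ.tilted φ) := by
    rw [integrable_tilted_iff hexp]
    refine .of_bound (by fun_prop) 1 (ae_of_all _ fun ω => ?_)
    have h1F : 0 < 1 + F ω := by linarith [hF0 ω]
    rw [smul_eq_mul, exp_neg, exp_log h1F, norm_of_nonneg (by positivity), inv_mul_le_iff₀ h1F]
    linarith
  exact hFint.mono' (hf i hi).aestronglyMeasurable
    (ae_of_all _ fun ω => Finset.single_le_sum (fun j _ => abs_nonneg (f j ω)) hi)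

end MeasureTheory

noncomputable def balancingWeight (a b x : ℝ) : ℝ :=
  if 0 < x then b / (a + b) else if x < 0 then a / (a + b) else 1

theorem balancingWeight_mul (a b x : ℝ) :
    balancingWeight a b x * x = b / (a + b) * max x 0 - a / (a + b) * max (-x) 0 := by
  rcases lt_trichotomy x 0 with hneg | rfl | hpos
  · simp [balancingWeight, hneg, hneg.not_gt, hneg.le]
  · simp [balancingWeight]
  · simp [balancingWeight, hpos, hpos.le]

theorem balancingWeight_pos_and_le_one {a b x : ℝ} (h : x ≠ 0 → 0 < a ∧ 0 < b) :
    0 < balancingWeight a b x ∧ balancingWeight a b x ≤ 1 := by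
  rcases lt_trichotomy x 0 with hneg | rfl | hpos
  · obtain ⟨ha, hb⟩ := h hneg.ne
    simp only [balancingWeight, hneg, hneg.not_gt, if_false, if_true]
    exact ⟨by positivity, div_le_one_of_le₀ (le_add_of_nonneg_right hb.le) (by positivity)⟩
  · simp [balancingWeight]
  · obtain ⟨ha, hb⟩ := h hpos.ne'
    simp only [balancingWeight, hpos, if_true]
    exact ⟨by positivity, div_le_one_of_le₀ (le_add_of_nonneg_left ha.le) (by positivity)⟩

theorem norm_div_add_le_one {a b : ℝ} (ha : 0 ≤ a) (hb : 0 ≤ b) : ‖b / (a + b)‖ ≤ 1 := by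
  rw [norm_of_nonneg (div_nonneg hb (add_nonneg ha hb))]
  exact div_le_one_of_le₀ (le_add_of_nonneg_left ha) (add_nonneg ha hb)

def NoOnePeriodArbitrage {α : Type*} (m : MeasurableSpace α) {mα : MeasurableSpace α}
    (μ : Measure α) (X : α → ℝ) : Prop :=
  ∀ f : α → ℝ, Measurable[m] f → (∀ᵐ ω ∂μ, 0 ≤ f ω * X ω) → ∀ᵐ ω ∂μ, f ω * X ω = 0

namespace NoOnePeriodArbitrage

variable {α : Type*} {m m' mα : MeasurableSpace α} {μ : Measure α} {X : α → ℝ}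

theorem neg (hNA : NoOnePeriodArbitrage m μ X) : NoOnePeriodArbitrage m μ (-X) := by
  intro f hf h
  simpa using hNA (-f) hf.neg (by simpa using h)

variable [IsFiniteMeasure μ]

theorem condExp_posPart_eq_zero_of_condExp_negPart_eq_zero (hNA : NoOnePeriodArbitrage m μ X)
    (hm : m ≤ mα) (hX : Integrable X μ) :
    ∀ᵐ ω ∂μ, μ[fun ω => max (-X ω) 0|m] ω = 0 → μ[fun ω => max (X ω) 0|m] ω = 0 := by
  set s := {ω | μ[fun ω => max (-X ω) 0|m] ω = 0}
  have hs : MeasurableSet[m] s :=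
    stronglyMeasurable_condExp.measurableSet_eq_fun stronglyMeasurable_const
  have hXs : ∀ᵐ ω ∂μ, ω ∈ s → 0 ≤ X ω := by
    filter_upwards [ae_eq_zero_of_condExp_eq_zero hm hX.neg.pos_part
      (ae_of_all _ fun ω => le_max_right _ _)] with ω h hω
    simpa using h hω
  have hsX : ∀ᵐ ω ∂μ, s.indicator 1 ω * X ω = 0 := by
    refine hNA _ (measurable_const.indicator hs) ?_
    filter_upwards [hXs] with ω h
    by_cases hω : ω ∈ s <;> simp [hω, h]
  have hposPart : (fun ω => max (X ω) 0) =ᵐ[μ.restrict s] 0 := by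
    filter_upwards [ae_restrict_of_ae hsX, ae_restrict_mem (hm s hs)] with ω h hω
    simp_all
  filter_upwards [(ae_restrict_iff' (hm s hs)).1 (condExp_ae_eq_restrict_zero hs hposPart)]
    with ω h hω using h hω

theorem condExp_posPart_pos_and_condExp_negPart_pos (hNA : NoOnePeriodArbitrage m μ X)
    (hm : m ≤ mα) (hX : Integrable X μ) :
    ∀ᵐ ω ∂μ, X ω ≠ 0 →
      0 < μ[fun ω => max (X ω) 0|m] ω ∧ 0 < μ[fun ω => max (-X ω) 0|m] ω := by
  have hAB_ae := hNA.neg.condExp_posPart_eq_zero_of_condExp_negPart_eq_zero hm hX.neg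
  simp only [Pi.neg_apply, neg_neg] at hAB_ae
  filter_upwards [condExp_nonneg (m := m) (ae_of_all μ fun ω => le_max_right (X ω) 0),
    condExp_nonneg (m := m) (ae_of_all μ fun ω => le_max_right (-X ω) 0),
    ae_eq_zero_of_condExp_eq_zero hm hX.pos_part (ae_of_all _ fun ω => le_max_right _ _),
    ae_eq_zero_of_condExp_eq_zero hm hX.neg.pos_part (ae_of_all _ fun ω => le_max_right _ _),
    hNA.condExp_posPart_eq_zero_of_condExp_negPart_eq_zero hm hX, hAB_ae]
    with ω hA hB hAX hBX hBA hAB hX0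
  have hAB_ne : μ[fun ω => max (X ω) 0|m] ω ≠ 0 ∧ μ[fun ω => max (-X ω) 0|m] ω ≠ 0 := by
    rcases hX0.lt_or_gt with hneg | hpos
    · have hB0 : μ[fun ω => max (-X ω) 0|m] ω ≠ 0 := fun h => by
        linarith [show 0 ≤ X ω by simpa using hBX h]
      exact ⟨fun h => hB0 (hAB h), hB0⟩
    · have hA0 : μ[fun ω => max (X ω) 0|m] ω ≠ 0 := fun h => by
        linarith [show X ω ≤ 0 by simpa using hAX h]
      exact ⟨hA0, fun h => hA0 (hBA h)⟩
  exact ⟨hA.lt_of_ne' hAB_ne.1, hB.lt_of_ne' hAB_ne.2⟩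

theorem exists_condExp_mul_eq_zero (hNA : NoOnePeriodArbitrage m μ X) (hm : m ≤ m')
    (hm' : m' ≤ mα) (hX : Measurable[m'] X) (hXi : Integrable X μ) :
    ∃ Z : α → ℝ, Measurable[m'] Z ∧ (∀ᵐ ω ∂μ, 0 < Z ω ∧ Z ω ≤ 1) ∧
      μ[fun ω => Z ω * X ω|m] =ᵐ[μ] 0 := by
  have hm0 := hm.trans hm'
  set p : α → ℝ := fun ω => max (X ω) 0
  set q : α → ℝ := fun ω => max (-X ω) 0
  have hp : Integrable p μ := hXi.pos_part
  have hq : Integrable q μ := hXi.neg.pos_part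
  set A := μ[p|m]
  set B := μ[q|m]
  have hA : Measurable[m] A := stronglyMeasurable_condExp.measurable
  have hB : Measurable[m] B := stronglyMeasurable_condExp.measurable
  set u : α → ℝ := fun ω => B ω / (A ω + B ω)
  set v : α → ℝ := fun ω => A ω / (A ω + B ω)
  have hu : Measurable[m] u := hB.div (hA.add hB)
  have hv : Measurable[m] v := hA.div (hA.add hB)
  have hAB0 : ∀ᵐ ω ∂μ, 0 ≤ A ω ∧ 0 ≤ B ω :=
    (condExp_nonneg (ae_of_all μ fun ω => le_max_right (X ω) 0)).and
      (condExp_nonneg (ae_of_all μ fun ω => le_max_right (-X ω) 0))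
  have hu1 : ∀ᵐ ω ∂μ, ‖u ω‖ ≤ 1 := hAB0.mono fun ω h => norm_div_add_le_one h.1 h.2
  have hv1 : ∀ᵐ ω ∂μ, ‖v ω‖ ≤ 1 :=
    hAB0.mono fun ω h => by simpa only [v, add_comm] using norm_div_add_le_one h.2 h.1
  refine ⟨fun ω => balancingWeight (A ω) (B ω) (X ω), ?_, ?_, ?_⟩
  · exact Measurable.ite (measurableSet_lt measurable_const hX) (hu.mono hm le_rfl)
      (Measurable.ite (measurableSet_lt hX measurable_const) (hv.mono hm le_rfl) measurable_const)
  · filter_upwards [hNA.condExp_posPart_pos_and_condExp_negPart_pos hm0 hXi] with ω h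
    exact balancingWeight_pos_and_le_one h
  · calc μ[fun ω => balancingWeight (A ω) (B ω) (X ω) * X ω|m]
        = μ[u * p - v * q|m] := by simp only [balancingWeight_mul]; rfl
      _ =ᵐ[μ] μ[u * p|m] - μ[v * q|m] :=
          condExp_sub (hp.bdd_mul (hu.mono hm0 le_rfl).aestronglyMeasurable hu1)
            (hq.bdd_mul (hv.mono hm0 le_rfl).aestronglyMeasurable hv1) m
      _ =ᵐ[μ] u * A - v * B :=
          (condExp_stronglyMeasurable_mul_of_bound hm0 hu.stronglyMeasurable hp 1 hu1).sub
            (condExp_stronglyMeasurable_mul_of_bound hm0 hv.stronglyMeasurable hq 1 hv1)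
      _ = 0 := by
        funext ω
        simp only [u, v, Pi.sub_apply, Pi.mul_apply, Pi.zero_apply]
        ring

-- Densities are written as `exp φ` so that the change of measure is `Measure.tilted`, which
-- normalises them.
theorem exists_condExp_exp_mul_eq_zero (hNA : NoOnePeriodArbitrage m μ X) (hm : m ≤ m')
    (hm' : m' ≤ mα) (hX : Measurable[m'] X) (hXi : Integrable X μ) :
    ∃ φ : α → ℝ, Measurable[m'] φ ∧ (∀ᵐ ω ∂μ, φ ω ≤ 0) ∧
      μ[fun ω => exp (φ ω) * X ω|m] =ᵐ[μ] 0 := by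
  obtain ⟨Z, hZ, hZ01, hZX⟩ := hNA.exists_condExp_mul_eq_zero hm hm' hX hXi
  refine ⟨fun ω => log (Z ω), hZ.log, ?_, (condExp_congr_ae ?_).trans hZX⟩
  · filter_upwards [hZ01] with ω h using log_nonpos h.1.le h.2
  · filter_upwards [hZ01] with ω h
    rw [exp_log h.1]

end NoOnePeriodArbitrage

def NoDiscreteArbitrage (P : Measure Ω) (ℱ : Filtration ℕ m0) (S : ℕ → Ω → ℝ) (N : ℕ) : Prop :=
  ∀ f : ℕ → Ω → ℝ, (∀ n, n < N → Measurable[ℱ n] (f n)) →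
    (∀ᵐ ω ∂P, 0 ≤ ∑ n ∈ Finset.range N, f n ω * (S (n + 1) ω - S n ω)) →
    ∀ᵐ ω ∂P, ∑ n ∈ Finset.range N, f n ω * (S (n + 1) ω - S n ω) = 0

namespace NoDiscreteArbitrage

variable {P : Measure Ω} {ℱ : Filtration ℕ m0} {S : ℕ → Ω → ℝ} {N : ℕ}

theorem noOnePeriodArbitrage (hNA : NoDiscreteArbitrage P ℱ S N) {t : ℕ} (ht : t < N)
    {Q : Measure Ω} (hQP : Q ≪ P) (hPQ : P ≪ Q) :
    NoOnePeriodArbitrage (ℱ t) Q fun ω => S (t + 1) ω - S t ω := by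
  intro f hf hpos
  set g : ℕ → Ω → ℝ := fun n ω => if n = t then f ω else 0
  have hsum : ∀ ω, ∑ n ∈ Finset.range N, g n ω * (S (n + 1) ω - S n ω) =
      f ω * (S (t + 1) ω - S t ω) := fun ω => by
    simp [g, ite_mul, Finset.mem_range.2 ht]
  have hg : ∀ n, n < N → Measurable[ℱ n] (g n) := by
    intro n _
    by_cases h : n = t
    · subst h
      simpa [g] using hf
    · simp [g, h]
  have hzero := hNA g hg (by filter_upwards [hPQ.ae_le hpos] with ω h; rwa [hsum])
  filter_upwards [hQP.ae_le hzero] with ω h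
  rwa [hsum] at h

theorem exists_equiv_martingaleMeasure_from [IsProbabilityMeasure P]
    (hNA : NoDiscreteArbitrage P ℱ S N) (hadapted : ∀ n, n ≤ N → Measurable[ℱ n] (S n))
    {t : ℕ} (ht : t ≤ N) :
    ∃ Q : Measure Ω, IsProbabilityMeasure Q ∧ Q ≪ P ∧ P ≪ Q ∧
      (∀ n, n ≤ N → Integrable (S n) Q) ∧
      ∀ n, t ≤ n → n < N → Q[S (n + 1)|ℱ n] =ᵐ[Q] S n := by
  induction ht using Nat.decreasingInduction with
  | self =>
    obtain ⟨Q, hQ, hQP, hPQ, hS⟩ := exists_equiv_probabilityMeasure_integrable (μ := P)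
      (Finset.range (N + 1)) (f := S) fun n hn =>
        (hadapted n (Finset.mem_range_succ_iff.1 hn)).mono (ℱ.le n) le_rfl
    exact ⟨Q, hQ, hQP, hPQ, fun n hn => hS n (Finset.mem_range_succ_iff.2 hn),
      fun n h1 h2 => absurd h2 (not_lt.2 h1)⟩
  | of_succ t ht ih =>
    obtain ⟨Q, hQ, hQP, hPQ, hS, hmart⟩ := ih
    obtain ⟨φ, hφ, hφ0, hφS⟩ := (hNA.noOnePeriodArbitrage ht hQP hPQ).exists_condExp_exp_mul_eq_zero
      (ℱ.mono t.le_succ) (ℱ.le (t + 1))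
      ((hadapted (t + 1) ht).sub ((hadapted t ht.le).mono (ℱ.mono t.le_succ) le_rfl))
      ((hS _ ht).sub (hS _ ht.le))
    have hφm : Measurable φ := hφ.mono (ℱ.le _) le_rfl
    have hexp := integrable_exp_of_ae_le hφm hφ0
    refine ⟨Q.tilted φ, isProbabilityMeasure_tilted hexp,
      (tilted_absolutelyContinuous Q φ).trans hQP, hPQ.trans (absolutelyContinuous_tilted hexp),
      fun n hn => integrable_tilted_of_ae_le hφm hφ0 (hS n hn), fun n htn hnN => ?_⟩
    have hSn : StronglyMeasurable[ℱ n] (S n) := (hadapted n hnN.le).stronglyMeasurable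
    refine condExp_tilted_ae_eq (ℱ.le n) hφm hφ0 (hS _ hnN) hSn (hS n hnN.le) ?_
    rcases htn.eq_or_lt with rfl | htn
    · exact hφS
    · exact condExp_mul_sub_ae_eq_zero (ℱ.le n)
        (hφ.mono (ℱ.mono htn) le_rfl).exp.stronglyMeasurable (ae_norm_exp_le hφ0)
        (hS _ hnN) hSn (hS n hnN.le) (hmart n htn hnN)

end NoDiscreteArbitrage

/-- **Dalang–Morton–Willinger.** If every discrete-time simple outcome
`∑_{n=1}^N f_{n-1} (S_n - S_{n-1})` that is a.s. nonnegative is a.s. zero, then there is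
a probability measure `Q`, mutually absolutely continuous with `P`, making `S` a
`Q`-martingale. -/
theorem stmt5 (P : MeasureTheory.Measure Ω) [MeasureTheory.IsProbabilityMeasure P]
    (N : ℕ) (ℱ : MeasureTheory.Filtration ℕ m0)
    (S : ℕ → Ω → ℝ) (hadapted : ∀ n, n ≤ N → Measurable[ℱ n] (S n))
    (hNA : ∀ f : ℕ → Ω → ℝ, (∀ n, n < N → Measurable[ℱ n] (f n)) →
      (∀ᵐ ω ∂P, 0 ≤ ∑ n ∈ Finset.range N, f n ω * (S (n + 1) ω - S n ω)) →
      (∀ᵐ ω ∂P, ∑ n ∈ Finset.range N, f n ω * (S (n + 1) ω - S n ω) = 0)) :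
    ∃ Q : MeasureTheory.Measure Ω, MeasureTheory.IsProbabilityMeasure Q ∧
      Q ≪ P ∧ P ≪ Q ∧
      (∀ n, n ≤ N → MeasureTheory.Integrable (S n) Q) ∧
      (∀ n, n < N → Q[S (n + 1)|ℱ n] =ᵐ[Q] S n) := by
  obtain ⟨Q, hQ, hQP, hPQ, hS, hmart⟩ :=
    NoDiscreteArbitrage.exists_equiv_martingaleMeasure_from hNA hadapted N.zero_le
  exact ⟨Q, hQ, hQP, hPQ, hS, fun n hn => hmart n n.zero_le hn⟩
end

section
/- Let X = (X_t)_{t≥0} be a càdlàg process adapted to 𝔽. Then X satisfies the no arbitrage property in the class S(𝔽) of simple predictable integrands of bounded support if and only if for every pair of bounded 𝔽-stopping times τ₀ ≤ τ₁ and every A ∈ F_{τ₀}, the random variable 1_A·(X_{τ₁} − X_{τ₀}) belongs to L⁰_{+−}. -/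
open MeasureTheory ProbabilityTheory Filter Set
open scoped NNReal ENNReal

variable {Ω : Type*} {m0 : MeasurableSpace Ω}

/-!
A simple strategy is a finite sum of single-step trades `g (X_τ - X_σ)` with `g` being
`F_σ`-measurable, and splitting `g` by sign shows that the condition on `1_A (X_{τ₁} - X_{τ₀})`
says exactly that no single-step trade is an arbitrage. Conversely, if the partial gain `G_m` of an
arbitrage is not itself an arbitrage gain, then the `(m+1)`-st trade restricted to the event
`{G_m ≤ 0}` is one; this event lies in `F_{τ_m}` because a càdlàg adapted process is progressively
measurable. Induction on the number of trades thus reduces any arbitrage to a single-step one.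
-/

open Topology

namespace NNReal

noncomputable def dyadicCeil (k : ℕ) (t : ℝ≥0) : ℝ≥0 := ⌈t * 2 ^ k⌉₊ / 2 ^ k

lemma le_dyadicCeil (k : ℕ) (t : ℝ≥0) : t ≤ dyadicCeil k t := by
  rw [dyadicCeil, le_div_iff₀ (by positivity)]
  exact Nat.le_ceil _

lemma dyadicCeil_le (k : ℕ) (t : ℝ≥0) : dyadicCeil k t ≤ t + (2 ^ k)⁻¹ := by
  rw [dyadicCeil, div_le_iff₀ (by positivity), add_mul, inv_mul_cancel₀ (by positivity)]
  exact (Nat.ceil_lt_add_one zero_le).le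

lemma tendsto_dyadicCeil (t : ℝ≥0) : Tendsto (fun k => dyadicCeil k t) atTop (𝓝 t) := by
  have hmesh : Tendsto (fun k : ℕ => ((2 : ℝ≥0) ^ k)⁻¹) atTop (𝓝 0) := by
    simp_rw [← inv_pow]
    exact tendsto_pow_atTop_nhds_zero_of_lt_one (by rw [← coe_lt_coe]; norm_num)
  refine tendsto_of_tendsto_of_tendsto_of_le_of_le tendsto_const_nhds ?_ (le_dyadicCeil · t)
    (dyadicCeil_le · t)
  simpa using tendsto_const_nhds.add hmesh

lemma measurable_natCeil_mul (c : ℝ≥0) : Measurable fun t : ℝ≥0 => ⌈t * c⌉₊ :=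
  (Nat.ceil_mono.comp fun _ _ h => mul_le_mul_left h c).measurable

end NNReal

open NNReal in
theorem MeasureTheory.Adapted.isStronglyProgressive_of_continuousWithinAt_Ici
    {β : Type*} [TopologicalSpace β] [TopologicalSpace.PseudoMetrizableSpace β]
    [SecondCountableTopology β] [MeasurableSpace β] [OpensMeasurableSpace β]
    {ℱ : Filtration ℝ≥0 m0} {X : ℝ≥0 → Ω → β} (hX : Adapted ℱ X)
    (hrc : ∀ ω t, ContinuousWithinAt (fun s => X s ω) (Ici t) t) :
    IsStronglyProgressive ℱ X := by
  intro i
  -- on `[0, i] × Ω`, the time `min (dyadicCeil k s) i` only takes countably many values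
  have happrox : ∀ k : ℕ, StronglyMeasurable[Subtype.instMeasurableSpace.prod (ℱ i)]
      fun p : Iic i × Ω => X (min (dyadicCeil k p.1) i) p.2 := by
    intro k
    have hgrid : Measurable[(ℱ i).prod ⊤] fun q : Ω × ℕ => X (min ((q.2 : ℝ≥0) / 2 ^ k) i) q.1 :=
      measurable_from_prod_countable_left fun q =>
        (hX (min ((q : ℝ≥0) / 2 ^ k) i)).mono (ℱ.mono (min_le_right _ _)) le_rfl
    have hindex : Measurable[Subtype.instMeasurableSpace.prod (ℱ i), (ℱ i).prod ⊤]
        fun p : Iic i × Ω => (p.2, ⌈(p.1 : ℝ≥0) * 2 ^ k⌉₊) :=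
      measurable_snd.prodMk (((measurable_natCeil_mul _).mono le_rfl le_top).comp
        (measurable_subtype_coe.comp measurable_fst))
    exact (hgrid.comp hindex).stronglyMeasurable
  refine stronglyMeasurable_of_tendsto atTop happrox (tendsto_pi_nhds.2 fun ⟨⟨s, hs⟩, ω⟩ => ?_)
  have hs : s ≤ i := hs
  refine (hrc ω s).tendsto.comp (tendsto_nhdsWithin_iff.2 ⟨?_, ?_⟩)
  · simpa [min_eq_left hs] using (tendsto_dyadicCeil s).min (tendsto_const_nhds (x := i))
  · exact Eventually.of_forall fun k => le_min (le_dyadicCeil k s) hs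

section ArbitrageGain

variable {μ : Measure Ω}

def IsArbitrageGain (μ : Measure Ω) (η : Ω → ℝ) : Prop :=
  (∀ᵐ ω ∂μ, 0 ≤ η ω) ∧ 0 < μ {ω | 0 < η ω}

lemma memLzeroPM_iff {η : Ω → ℝ} :
    MemLzeroPM μ η ↔ ¬IsArbitrageGain μ η ∧ ¬IsArbitrageGain μ (-η) := by
  simp only [MemLzeroPM, IsArbitrageGain, Pi.neg_apply, neg_nonneg, neg_pos]

lemma IsArbitrageGain.indicator_of_mul {g D : Ω → ℝ} (h : IsArbitrageGain μ (g * D)) :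
    IsArbitrageGain μ ({ω | 0 < g ω}.indicator D) ∨
      IsArbitrageGain μ (-{ω | g ω < 0}.indicator D) := by
  obtain ⟨hnn, hpos⟩ := h
  have hnn_pos : ∀ᵐ ω ∂μ, 0 ≤ {ω | 0 < g ω}.indicator D ω := by
    filter_upwards [hnn] with ω h
    simp only [indicator_apply, mem_ofPred_eq, Pi.mul_apply] at h ⊢
    split_ifs with hg
    exacts [nonneg_of_mul_nonneg_right h hg, le_rfl]
  have hnn_neg : ∀ᵐ ω ∂μ, 0 ≤ (-{ω | g ω < 0}.indicator D) ω := by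
    filter_upwards [hnn] with ω h
    simp only [indicator_apply, mem_ofPred_eq, Pi.mul_apply, Pi.neg_apply] at h ⊢
    split_ifs with hg
    exacts [by nlinarith, by simp]
  refine or_iff_not_imp_left.2 fun hnot_pos => ⟨hnn_neg, pos_iff_ne_zero.2 fun h_neg => hpos.ne' ?_⟩
  have h_pos : μ {ω | 0 < {ω | 0 < g ω}.indicator D ω} = 0 := by
    simpa [IsArbitrageGain, hnn_pos, pos_iff_ne_zero] using hnot_pos
  refine measure_mono_null (fun ω (hω : 0 < g ω * D ω) => ?_) (measure_union_null h_pos h_neg)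
  rcases lt_trichotomy (g ω) 0 with hg | hg | hg
  · right
    simp only [mem_ofPred_eq, Pi.neg_apply, indicator_of_mem (show ω ∈ {ω | g ω < 0} from hg)]
    nlinarith
  · simp [hg] at hω
  · left
    simp only [mem_ofPred_eq, indicator_of_mem (show ω ∈ {ω | 0 < g ω} from hg)]
    exact pos_of_mul_pos_right hω hg.le

lemma IsArbitrageGain.indicator_of_add {G Y : Ω → ℝ} (h : IsArbitrageGain μ (G + Y))
    (hG : ¬IsArbitrageGain μ G) : IsArbitrageGain μ ({ω | G ω ≤ 0}.indicator Y) := by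
  obtain ⟨hnn, hpos⟩ := h
  refine ⟨?_, ?_⟩
  · filter_upwards [hnn] with ω h
    simp only [indicator_apply, mem_ofPred_eq, Pi.add_apply] at h ⊢
    split_ifs with hG <;> linarith
  by_cases hneg : μ {ω | G ω < 0} = 0
  · have hG_nonneg : ∀ᵐ ω ∂μ, 0 ≤ G ω := by simpa [ae_iff] using hneg
    have hG_nonpos : ∀ᵐ ω ∂μ, G ω ≤ 0 := by
      have : μ {ω | 0 < G ω} = 0 := by
        simpa [IsArbitrageGain, hG_nonneg, pos_iff_ne_zero] using hG
      simpa [ae_iff] using this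
    refine hpos.trans_le (measure_mono_ae ?_)
    filter_upwards [hG_nonpos] with ω hω (hpos : 0 < G ω + Y ω)
    change 0 < {ω | G ω ≤ 0}.indicator Y ω
    rw [indicator_of_mem (show ω ∈ {ω | G ω ≤ 0} from hω)]
    linarith
  · refine (pos_iff_ne_zero.2 hneg).trans_le (measure_mono_ae ?_)
    filter_upwards [hnn] with ω (h : 0 ≤ G ω + Y ω) (hω : G ω < 0)
    change 0 < {ω | G ω ≤ 0}.indicator Y ω
    rw [indicator_of_mem (show ω ∈ {ω | G ω ≤ 0} from hω.le)]
    linarith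

end ArbitrageGain

theorem MeasureTheory.IsStronglyProgressive.measurable_comp_stoppingTime
    {β : Type*} [TopologicalSpace β] [TopologicalSpace.PseudoMetrizableSpace β]
    [MeasurableSpace β] [BorelSpace β]
    {ℱ : Filtration ℝ≥0 m0} {X : ℝ≥0 → Ω → β} (hX : IsStronglyProgressive ℱ X)
    {τ : Ω → ℝ≥0} (hτ : IsStoppingTime ℱ fun ω => (τ ω : WithTop ℝ≥0)) :
    Measurable[hτ.measurableSpace] fun ω => X (τ ω) ω :=
  measurable_stoppedValue hX hτ

namespace SimpleStrategy

variable {ℱ : Filtration ℝ≥0 m0} (H : SimpleStrategy ℱ) (X : ℝ≥0 → Ω → ℝ)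

def partialGains (m : ℕ) (ω : Ω) : ℝ :=
  ∑ j ∈ Finset.Ico 1 m, H.g j ω * (X (H.τ (j + 1) ω) ω - X (H.τ j ω) ω)

lemma partialGains_one : H.partialGains X 1 = 0 := by
  ext ω
  simp [partialGains]

lemma partialGains_succ {m : ℕ} (hm : 1 ≤ m) :
    H.partialGains X (m + 1) =
      H.partialGains X m + fun ω => H.g m ω * (X (H.τ (m + 1) ω) ω - X (H.τ m ω) ω) := by
  ext ω
  exact Finset.sum_Ico_succ_top hm _

variable {H X}

lemma τ_mono {j k : ℕ} (hj : 1 ≤ j) (hjk : j ≤ k) (hk : k ≤ H.n) (ω : Ω) :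
    H.τ j ω ≤ H.τ k ω := by
  induction k, hjk using Nat.le_induction with
  | base => exact le_rfl
  | succ k hjk ih => exact (ih (by omega)).trans (H.mono k (by omega) (by omega) ω)

lemma exists_bound_τ {j : ℕ} (hj : 1 ≤ j) (hjn : j ≤ H.n) : ∃ T : ℝ≥0, ∀ ω, H.τ j ω ≤ T := by
  obtain ⟨T, hT⟩ := H.bounded
  exact ⟨T, fun ω => (H.τ_mono hj hjn le_rfl ω).trans (hT ω)⟩

lemma measurable_partialGains (hX : IsStronglyProgressive ℱ X) {m : ℕ} (hm : 1 ≤ m)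
    (hmn : m ≤ H.n) : Measurable[(H.stopping m hm hmn).measurableSpace] (H.partialGains X m) := by
  refine Finset.measurable_sum _ fun j hj => ?_
  obtain ⟨hj1, hjm⟩ := Finset.mem_Ico.mp hj
  have hle : ∀ {k} (hk : 1 ≤ k) (hkm : k ≤ m),
      (H.stopping k hk (hkm.trans hmn)).measurableSpace ≤ (H.stopping m hm hmn).measurableSpace :=
    fun hk hkm => IsStoppingTime.measurableSpace_mono _ _
      fun ω => WithTop.coe_le_coe.2 (H.τ_mono hk hkm hmn ω)
  have hXj := (hX.measurable_comp_stoppingTime (H.stopping j hj1 (by omega))).mono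
    (hle hj1 hjm.le) le_rfl
  have hXj' := (hX.measurable_comp_stoppingTime (H.stopping (j + 1) (by omega) (by omega))).mono
    (hle (by omega) hjm) le_rfl
  exact ((H.g_meas j hj1 (by omega)).mono (hle hj1 hjm.le) le_rfl).mul (hXj'.sub hXj)

variable {σ τ : Ω → ℝ≥0} (hσ : IsStoppingTime ℱ fun ω => (σ ω : WithTop ℝ≥0))
  (hτ : IsStoppingTime ℱ fun ω => (τ ω : WithTop ℝ≥0)) (hτ_bdd : ∃ T : ℝ≥0, ∀ ω, τ ω ≤ T)
  (hστ : ∀ ω, σ ω ≤ τ ω) {g : Ω → ℝ} (hg : Measurable[hσ.measurableSpace] g)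

def single : SimpleStrategy ℱ where
  n := 2
  two_le := le_rfl
  g0 := 0
  τ j := if j ≤ 1 then σ else τ
  g _ := g
  stopping j hj hj2 := by
    interval_cases j
    · simpa using hσ
    · simpa using hτ
  mono j hj hj2 ω := by
    interval_cases j
    simpa using hστ ω
  bounded := by simpa using hτ_bdd
  g_meas j hj hj2 := by
    interval_cases j
    exact hg

lemma gains_single (X : ℝ≥0 → Ω → ℝ) :
    (single hσ hτ hτ_bdd hστ hg).gains X = fun ω => g ω * (X (τ ω) ω - X (σ ω) ω) := by
  ext ω
  simp [gains, single]

end SimpleStrategy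

section NoArbitrage

variable {μ : Measure Ω} {ℱ : Filtration ℝ≥0 m0} {X : ℝ≥0 → Ω → ℝ}

def NoSingleStepArbitrage (μ : Measure Ω) (ℱ : Filtration ℝ≥0 m0) (X : ℝ≥0 → Ω → ℝ) : Prop :=
  ∀ (σ τ : Ω → ℝ≥0) (hσ : IsStoppingTime ℱ fun ω => (σ ω : WithTop ℝ≥0)),
    IsStoppingTime ℱ (fun ω => (τ ω : WithTop ℝ≥0)) → (∃ T : ℝ≥0, ∀ ω, τ ω ≤ T) →
    (∀ ω, σ ω ≤ τ ω) → ∀ g : Ω → ℝ, Measurable[hσ.measurableSpace] g →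
    ¬IsArbitrageGain μ fun ω => g ω * (X (τ ω) ω - X (σ ω) ω)

def StoppedIncrementsMemLzeroPM (μ : Measure Ω) (ℱ : Filtration ℝ≥0 m0)
    (X : ℝ≥0 → Ω → ℝ) : Prop :=
  ∀ (τ0 τ1 : Ω → ℝ≥0) (hτ0 : IsStoppingTime ℱ fun ω => (τ0 ω : WithTop ℝ≥0)),
    IsStoppingTime ℱ (fun ω => (τ1 ω : WithTop ℝ≥0)) →
    (∃ T : ℝ≥0, ∀ ω, τ0 ω ≤ T) → (∃ T : ℝ≥0, ∀ ω, τ1 ω ≤ T) → (∀ ω, τ0 ω ≤ τ1 ω) →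
    ∀ A : Set Ω, MeasurableSet[hτ0.measurableSpace] A →
      MemLzeroPM μ (A.indicator fun ω => X (τ1 ω) ω - X (τ0 ω) ω)

lemma NoArbitrageSimple.noSingleStepArbitrage (h : NoArbitrageSimple μ ℱ X) :
    NoSingleStepArbitrage μ ℱ X := fun _ _ hσ hτ hτ_bdd hστ _ hg harb =>
  h ⟨.single hσ hτ hτ_bdd hστ hg, by
    rw [IsArbitrage, SimpleStrategy.gains_single]
    exact harb⟩

lemma NoSingleStepArbitrage.stoppedIncrementsMemLzeroPM (h : NoSingleStepArbitrage μ ℱ X) :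
    StoppedIncrementsMemLzeroPM μ ℱ X := by
  intro τ0 τ1 hτ0 hτ1 _ hτ1_bdd hle A hA
  have hfree (c : ℝ) :
      ¬IsArbitrageGain μ (A.indicator fun ω => c * (X (τ1 ω) ω - X (τ0 ω) ω)) := by
    convert h τ0 τ1 hτ0 hτ1 hτ1_bdd hle _ ((measurable_const (a := c)).indicator hA) using 2
    exact funext fun _ => indicator_mul_left _ _ _
  have hneg := hfree (-1)
  simp only [neg_one_mul, indicator_neg] at hneg
  exact memLzeroPM_iff.2 ⟨by simpa using hfree 1, hneg⟩

lemma StoppedIncrementsMemLzeroPM.noSingleStepArbitrage (h : StoppedIncrementsMemLzeroPM μ ℱ X) :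
    NoSingleStepArbitrage μ ℱ X := by
  intro σ τ hσ hτ ⟨T, hT⟩ hστ g hg harb
  have hA (A : Set Ω) (hA : MeasurableSet[hσ.measurableSpace] A) :=
    memLzeroPM_iff.1 (h σ τ hσ hτ ⟨T, fun ω => (hστ ω).trans (hT ω)⟩ ⟨T, hT⟩ hστ A hA)
  rcases IsArbitrageGain.indicator_of_mul (D := fun ω => X (τ ω) ω - X (σ ω) ω) harb with
    hpos | hneg
  · exact (hA _ (measurableSet_lt measurable_const hg)).1 hpos
  · exact (hA _ (measurableSet_lt hg measurable_const)).2 hneg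

lemma NoSingleStepArbitrage.noArbitrageSimple (hX : IsStronglyProgressive ℱ X)
    (h : NoSingleStepArbitrage μ ℱ X) : NoArbitrageSimple μ ℱ X := by
  rintro ⟨H, harb⟩
  suffices ∀ m, 1 ≤ m → m ≤ H.n → ¬IsArbitrageGain μ (H.partialGains X m) from
    this H.n (by linarith [H.two_le]) le_rfl harb
  intro m hm
  induction m, hm using Nat.le_induction with
  | base => simp [H.partialGains_one, IsArbitrageGain]
  | succ m hm ih =>
    intro hmn harb_succ
    rw [H.partialGains_succ X hm] at harb_succ
    have hG := H.measurable_partialGains hX hm (by omega)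
    refine h _ _ (H.stopping m hm (by omega)) (H.stopping (m + 1) (by omega) hmn)
      (H.exists_bound_τ (by omega) hmn) (H.mono m hm hmn) _
      ((H.g_meas m hm hmn).indicator (measurableSet_le hG (measurable_const (a := 0)))) ?_
    convert harb_succ.indicator_of_add (ih (by omega)) using 1
    ext ω
    rw [indicator_mul_left]

end NoArbitrage

theorem stmt9_general (μ : MeasureTheory.Measure Ω)
    (ℱ : MeasureTheory.Filtration ℝ≥0 m0)
    (X : ℝ≥0 → Ω → ℝ) (hadapted : MeasureTheory.Adapted ℱ X) (hcadlag : IsCadlag X) :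
    NoArbitrageSimple μ ℱ X ↔
      ∀ (τ0 τ1 : Ω → ℝ≥0)
        (hτ0 : MeasureTheory.IsStoppingTime ℱ (fun ω => ((τ0 ω : ℝ≥0) : WithTop ℝ≥0)))
        (_hτ1 : MeasureTheory.IsStoppingTime ℱ (fun ω => ((τ1 ω : ℝ≥0) : WithTop ℝ≥0))),
        (∃ T : ℝ≥0, ∀ ω, τ0 ω ≤ T) → (∃ T : ℝ≥0, ∀ ω, τ1 ω ≤ T) →
        (∀ ω, τ0 ω ≤ τ1 ω) →
        ∀ A : Set Ω, MeasurableSet[hτ0.measurableSpace] A →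
          MemLzeroPM μ (A.indicator fun ω => X (τ1 ω) ω - X (τ0 ω) ω) := by
  have hX : IsStronglyProgressive ℱ X :=
    hadapted.isStronglyProgressive_of_continuousWithinAt_Ici fun ω => (hcadlag ω).1
  exact ⟨fun h => h.noSingleStepArbitrage.stoppedIncrementsMemLzeroPM,
    fun h => (StoppedIncrementsMemLzeroPM.noSingleStepArbitrage h).noArbitrageSimple hX⟩

/-- **Lemma 5.** A càdlàg adapted process `X` has no arbitrage in the class `S(𝔽)` of
simple predictable integrands of bounded support iff for every pair of bounded stopping
times `τ₀ ≤ τ₁` and every `A ∈ F_{τ₀}`, `1_A (X_{τ₁} - X_{τ₀}) ∈ L⁰_{+-}`. -/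
theorem stmt9 (μ : MeasureTheory.Measure Ω) [MeasureTheory.IsProbabilityMeasure μ]
    (ℱ : MeasureTheory.Filtration ℝ≥0 m0)
    (X : ℝ≥0 → Ω → ℝ) (hadapted : MeasureTheory.Adapted ℱ X) (hcadlag : IsCadlag X) :
    NoArbitrageSimple μ ℱ X ↔
      ∀ (τ0 τ1 : Ω → ℝ≥0)
        (hτ0 : MeasureTheory.IsStoppingTime ℱ (fun ω => ((τ0 ω : ℝ≥0) : WithTop ℝ≥0)))
        (_hτ1 : MeasureTheory.IsStoppingTime ℱ (fun ω => ((τ1 ω : ℝ≥0) : WithTop ℝ≥0))),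
        (∃ T : ℝ≥0, ∀ ω, τ0 ω ≤ T) → (∃ T : ℝ≥0, ∀ ω, τ1 ω ≤ T) →
        (∀ ω, τ0 ω ≤ τ1 ω) →
        ∀ A : Set Ω, MeasurableSet[hτ0.measurableSpace] A →
          MemLzeroPM μ (A.indicator fun ω => X (τ1 ω) ω - X (τ0 ω) ω) :=
  stmt9_general μ ℱ X hadapted hcadlag
end
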